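/- For every span program P on n boolean variables there exists a real span program P' on n boolean variables — i.e., one for which, in some orthonormal basis of its inner product space, all coordinates of the target vector and of every input vector are real — such that f_{P'}(x) = f_P(x) and wsize_s(P', x) ≤ wsize_s(P, x) for every x ∈ {0,1}^n and every cost vector s ∈ [0,∞)^n. -/

import Mathlib

/-!
Identify `ℂ^d` with `ℝ^(2d)` through `v ↦ (Re v, Im v)`: this map is `ℝ`-linear and turns
the complex inner product into its real part. Replace every input vector `v` by the two real
vectors `(Re v, Im v)` and `(Re (i v), Im (i v))`, both carrying the label of `v`. A positive
witness `w` becomes `(Re w, Im w)`, because `w_i v_i = Re w_i • v_i + Im w_i • (i v_i)`; a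
negative witness `w'` becomes `(Re w', Im w')`, whose inner products with the two copies of
`v_i` are `Re ⟪v_i, w'⟫` and `Im ⟪v_i, w'⟫`. Either way `|a|² = (Re a)² + (Im a)²` keeps the
cost. Since `f_P(x)` is decided by which kind of witness exists, the real program computes the
same function, and each witness size can only decrease.
-/
open scoped ComplexInnerProductSpace

/-- A span program on `n` boolean variables: an inner product space `ℂ^d`, a target vector,
and input vectors indexed by `Fin m`, each either free (`label i = none`) or labeled by a
pair `(j, b)` (`label i = some (j, b)`, meaning `i ∈ I_{j,b}`). -/
structure SpanProgram (n : ℕ) : Type where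
  d : ℕ
  m : ℕ
  label : Fin m → Option (Fin n × Bool)
  target : EuclideanSpace ℂ (Fin d)
  input : Fin m → EuclideanSpace ℂ (Fin d)

namespace SpanProgram

variable {n : ℕ}

/-- Input vector `i` is available on input `x`: it is free, or labeled `(j, x_j)` for some `j`. -/
def avail (P : SpanProgram n) (x : Fin n → Bool) (i : Fin P.m) : Prop :=
  P.label i = none ∨ ∃ j : Fin n, P.label i = some (j, x j)

instance (P : SpanProgram n) (x : Fin n → Bool) (i : Fin P.m) : Decidable (P.avail x i) :=
  inferInstanceAs (Decidable (P.label i = none ∨ ∃ j : Fin n, P.label i = some (j, x j)))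

/-- The boolean function computed by `P`:  `f_P(x) = 1` iff the target is in the range of
`A ∘ Π(x)`, i.e. the target is a linear combination of the available input vectors. -/
def eval (P : SpanProgram n) (x : Fin n → Bool) : Prop :=
  ∃ w : Fin P.m → ℂ, ∑ i, (if P.avail x i then w i else 0) • P.input i = P.target

/-- The squared cost weight of coordinate `i`:  `s j` if `i ∈ I_{j,b}`, and `0` if `i` is free.
Thus `‖S w‖² = ∑ i, P.cw s i * ‖w i‖²`. -/
def cw (P : SpanProgram n) (s : Fin n → ℝ) (i : Fin P.m) : ℝ :=
  match P.label i with
  | none => 0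
  | some jb => s jb.1

open Classical in
/-- The witness size of `P` on input `x` with costs `s`. -/
noncomputable def wsizex (P : SpanProgram n) (s : Fin n → ℝ) (x : Fin n → Bool) : ℝ :=
  if P.eval x then
    sInf { r : ℝ | ∃ w : Fin P.m → ℂ,
      (∑ i, (if P.avail x i then w i else 0) • P.input i = P.target) ∧
      r = ∑ i, P.cw s i * ‖w i‖ ^ 2 }
  else
    sInf { r : ℝ | ∃ w' : EuclideanSpace ℂ (Fin P.d), ⟪P.target, w'⟫ = 1 ∧
      (∀ i, P.avail x i → ⟪P.input i, w'⟫ = 0) ∧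
      r = ∑ i, P.cw s i * ‖⟪P.input i, w'⟫‖ ^ 2 }

/-- The witness size of `P` with costs `s`, restricted to the domain `D`:
`max_{x ∈ D} wsize_s(P, x)`. -/
noncomputable def wsizeD (P : SpanProgram n) (s : Fin n → ℝ) (D : Set (Fin n → Bool)) : ℝ :=
  sSup { r : ℝ | ∃ x ∈ D, r = P.wsizex s x }

end SpanProgram

/-- A span program is real if, in some orthonormal basis of its inner product space, all
coordinates of the target vector and of every input vector are real. -/
def SpanProgram.IsReal {n : ℕ} (P : SpanProgram n) : Prop :=
  ∃ b : OrthonormalBasis (Fin P.d) ℂ (EuclideanSpace ℂ (Fin P.d)),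
    (∀ k, (b.repr P.target k).im = 0) ∧ ∀ i k, (b.repr (P.input i) k).im = 0

namespace SpanProgram

variable {n : ℕ}

def IsPosWitness (P : SpanProgram n) (x : Fin n → Bool) (w : Fin P.m → ℂ) : Prop :=
  ∑ i, (if P.avail x i then w i else 0) • P.input i = P.target

def IsNegWitness (P : SpanProgram n) (x : Fin n → Bool) (w : EuclideanSpace ℂ (Fin P.d)) :
    Prop :=
  ⟪P.target, w⟫ = 1 ∧ ∀ i, P.avail x i → ⟪P.input i, w⟫ = 0

noncomputable def posCost (P : SpanProgram n) (s : Fin n → ℝ) (w : Fin P.m → ℂ) : ℝ :=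
  ∑ i, P.cw s i * ‖w i‖ ^ 2

noncomputable def negCost (P : SpanProgram n) (s : Fin n → ℝ) (w : EuclideanSpace ℂ (Fin P.d)) :
    ℝ :=
  ∑ i, P.cw s i * ‖⟪P.input i, w⟫‖ ^ 2

lemma cw_nonneg (P : SpanProgram n) {s : Fin n → ℝ} (hs : ∀ j, 0 ≤ s j) (i : Fin P.m) :
    0 ≤ P.cw s i := by
  unfold cw
  split
  · exact le_rfl
  · exact hs _

lemma posCost_nonneg (P : SpanProgram n) {s : Fin n → ℝ} (hs : ∀ j, 0 ≤ s j)
    (w : Fin P.m → ℂ) : 0 ≤ P.posCost s w :=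
  Finset.sum_nonneg fun i _ => mul_nonneg (P.cw_nonneg hs i) (sq_nonneg _)

lemma negCost_nonneg (P : SpanProgram n) {s : Fin n → ℝ} (hs : ∀ j, 0 ≤ s j)
    (w : EuclideanSpace ℂ (Fin P.d)) : 0 ≤ P.negCost s w :=
  Finset.sum_nonneg fun i _ => mul_nonneg (P.cw_nonneg hs i) (sq_nonneg _)

lemma IsNegWitness.not_eval {P : SpanProgram n} {x : Fin n → Bool}
    {w : EuclideanSpace ℂ (Fin P.d)} (hw : P.IsNegWitness x w) : ¬ P.eval x := by
  rintro ⟨c, hc⟩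
  have : ⟪P.target, w⟫ = 0 := by
    rw [← hc, sum_inner]
    refine Finset.sum_eq_zero fun i _ => ?_
    split_ifs with hi
    · rw [inner_smul_left, hw.2 i hi, mul_zero]
    · rw [zero_smul, inner_zero_left]
  exact one_ne_zero (hw.1.symm.trans this)

/-- Farkas' lemma for span programs: the target lies outside the span of the available
inputs, so a vector orthogonal to that span but not to the target yields a negative witness. -/
lemma exists_isNegWitness_of_not_eval {P : SpanProgram n} {x : Fin n → Bool}
    (h : ¬ P.eval x) : ∃ w, P.IsNegWitness x w := by
  set K := Submodule.span ℂ (Set.range fun i => if P.avail x i then P.input i else 0)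
  have htK : P.target ∉ K := by
    rw [Submodule.mem_span_range_iff_exists_fun]
    rintro ⟨c, hc⟩
    exact h ⟨c, by simpa only [ite_smul, smul_ite, zero_smul, smul_zero] using hc⟩
  rw [← K.orthogonal_orthogonal, Submodule.mem_orthogonal] at htK
  push Not at htK
  obtain ⟨z, hzK, hz⟩ := htK
  have htz : ⟪P.target, z⟫ ≠ 0 := fun h0 => hz (inner_eq_zero_symm.mp h0)
  refine ⟨⟪P.target, z⟫⁻¹ • z, by rw [inner_smul_right, inv_mul_cancel₀ htz], fun i hi => ?_⟩
  have hiK : P.input i ∈ K := Submodule.subset_span ⟨i, if_pos hi⟩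
  rw [inner_smul_right, (K.mem_orthogonal z).mp hzK _ hiK, mul_zero]

structure SimulatesWitnessesOf (Q P : SpanProgram n) : Prop where
  pos : ∀ x w, P.IsPosWitness x w →
    ∃ w', Q.IsPosWitness x w' ∧ ∀ s, Q.posCost s w' = P.posCost s w
  neg : ∀ x w, P.IsNegWitness x w →
    ∃ w', Q.IsNegWitness x w' ∧ ∀ s, Q.negCost s w' = P.negCost s w

namespace SimulatesWitnessesOf

variable {P Q : SpanProgram n}

lemma eval_iff (h : Q.SimulatesWitnessesOf P) (x : Fin n → Bool) : Q.eval x ↔ P.eval x := by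
  refine ⟨fun hQ => ?_, fun ⟨w, hw⟩ => ?_⟩
  · by_contra hP
    obtain ⟨w, hw⟩ := exists_isNegWitness_of_not_eval hP
    obtain ⟨w', hw', -⟩ := h.neg x w hw
    exact hw'.not_eval hQ
  · obtain ⟨w', hw', -⟩ := h.pos x w hw
    exact ⟨w', hw'⟩

lemma wsizex_le (h : Q.SimulatesWitnessesOf P) {s : Fin n → ℝ} (hs : ∀ j, 0 ≤ s j)
    (x : Fin n → Bool) : Q.wsizex s x ≤ P.wsizex s x := by
  unfold wsizex
  by_cases hP : P.eval x
  · rw [if_pos hP, if_pos ((h.eval_iff x).2 hP)]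
    obtain ⟨w₀, hw₀⟩ := hP
    refine csInf_le_csInf ?_ ⟨_, w₀, hw₀, rfl⟩ ?_
    · exact ⟨0, by rintro r ⟨w', -, rfl⟩; exact Q.posCost_nonneg hs w'⟩
    · rintro r ⟨w, hw, rfl⟩
      obtain ⟨w', hw', hcost⟩ := h.pos x w hw
      exact ⟨w', hw', (hcost s).symm⟩
  · rw [if_neg hP, if_neg (mt (h.eval_iff x).1 hP)]
    obtain ⟨w₀, hw₀⟩ := exists_isNegWitness_of_not_eval hP
    refine csInf_le_csInf ?_ ⟨_, w₀, hw₀.1, hw₀.2, rfl⟩ ?_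
    · exact ⟨0, by rintro r ⟨w', -, -, rfl⟩; exact Q.negCost_nonneg hs w'⟩
    · rintro r ⟨w, hw₁, hw₂, rfl⟩
      obtain ⟨w', hw', hcost⟩ := h.neg x w ⟨hw₁, hw₂⟩
      exact ⟨w', hw'.1, hw'.2, (hcost s).symm⟩

end SimulatesWitnessesOf

end SpanProgram

lemma Complex.sq_norm_re_add_sq_norm_im (z : ℂ) :
    ‖(z.re : ℂ)‖ ^ 2 + ‖(z.im : ℂ)‖ ^ 2 = ‖z‖ ^ 2 := by
  simp only [Complex.sq_norm, Complex.normSq_apply, Complex.ofReal_re, Complex.ofReal_im]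
  ring

namespace EuclideanSpace

noncomputable def reIm (d : ℕ) :
    EuclideanSpace ℂ (Fin d) →ₗ[ℝ] EuclideanSpace ℂ (Fin (d + d)) where
  toFun v := WithLp.toLp 2 (Fin.append (fun k => ((v k).re : ℂ)) fun k => ((v k).im : ℂ))
  map_add' v w := by
    ext k
    refine Fin.addCases (fun k => ?_) (fun k => ?_) k <;>
      simp only [PiLp.add_apply, Fin.append_left, Fin.append_right] <;> simp
  map_smul' r v := by
    ext k
    refine Fin.addCases (fun k => ?_) (fun k => ?_) k <;>
      simp only [PiLp.smul_apply, Fin.append_left, Fin.append_right] <;> simp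

variable {d : ℕ}

@[simp] lemma reIm_castAdd (v : EuclideanSpace ℂ (Fin d)) (k : Fin d) :
    reIm d v (Fin.castAdd d k) = (v k).re :=
  Fin.append_left (fun k => ((v k).re : ℂ)) (fun k => ((v k).im : ℂ)) k

@[simp] lemma reIm_natAdd (v : EuclideanSpace ℂ (Fin d)) (k : Fin d) :
    reIm d v (Fin.natAdd d k) = (v k).im :=
  Fin.append_right (fun k => ((v k).re : ℂ)) (fun k => ((v k).im : ℂ)) k

lemma im_reIm_apply (v : EuclideanSpace ℂ (Fin d)) (k : Fin (d + d)) : (reIm d v k).im = 0 := by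
  refine Fin.addCases (fun k => ?_) (fun k => ?_) k <;>
    simp only [reIm_castAdd, reIm_natAdd, Complex.ofReal_im]

lemma inner_reIm (v w : EuclideanSpace ℂ (Fin d)) :
    ⟪reIm d v, reIm d w⟫ = (⟪v, w⟫.re : ℂ) := by
  simp only [PiLp.inner_apply, RCLike.inner_apply, Fin.sum_univ_add, reIm_castAdd, reIm_natAdd,
    ← Finset.sum_add_distrib, Complex.re_sum]
  push_cast
  refine Finset.sum_congr rfl fun k _ => ?_
  simp [Complex.mul_re]

lemma inner_reIm_I_smul (v w : EuclideanSpace ℂ (Fin d)) :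
    ⟪reIm d (Complex.I • v), reIm d w⟫ = (⟪v, w⟫.im : ℂ) := by
  simp [inner_reIm]

lemma reIm_smul (c : ℂ) (v : EuclideanSpace ℂ (Fin d)) :
    reIm d (c • v) = (c.re : ℂ) • reIm d v + (c.im : ℂ) • reIm d (Complex.I • v) := by
  ext k
  refine Fin.addCases (fun k => ?_) (fun k => ?_) k <;>
    simp only [PiLp.add_apply, PiLp.smul_apply, reIm_castAdd, reIm_natAdd] <;>
    simp [Complex.mul_re, Complex.mul_im, sub_eq_add_neg]

end EuclideanSpace

namespace SpanProgram

open EuclideanSpace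

variable {n : ℕ}

-- Reducible, so that `Fin P.realify.d` and `Fin (P.d + P.d)` are identified when rewriting.
noncomputable abbrev realify (P : SpanProgram n) : SpanProgram n where
  d := P.d + P.d
  m := P.m + P.m
  label := Fin.append P.label P.label
  target := reIm P.d P.target
  input := Fin.append (fun i => reIm P.d (P.input i)) fun i => reIm P.d (Complex.I • P.input i)

variable (P : SpanProgram n)

@[simp] lemma realify_input_castAdd (i : Fin P.m) :
    P.realify.input (Fin.castAdd P.m i) = reIm P.d (P.input i) := by
  simp only [Fin.append_left]

@[simp] lemma realify_input_natAdd (i : Fin P.m) :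
    P.realify.input (Fin.natAdd P.m i) = reIm P.d (Complex.I • P.input i) := by
  simp only [Fin.append_right]

@[simp] lemma realify_avail_castAdd (x : Fin n → Bool) (i : Fin P.m) :
    P.realify.avail x (Fin.castAdd P.m i) ↔ P.avail x i := by
  simp only [avail, Fin.append_left]

@[simp] lemma realify_avail_natAdd (x : Fin n → Bool) (i : Fin P.m) :
    P.realify.avail x (Fin.natAdd P.m i) ↔ P.avail x i := by
  simp only [avail, Fin.append_right]

@[simp] lemma realify_cw_castAdd (s : Fin n → ℝ) (i : Fin P.m) :
    P.realify.cw s (Fin.castAdd P.m i) = P.cw s i := by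
  simp only [cw, Fin.append_left]

@[simp] lemma realify_cw_natAdd (s : Fin n → ℝ) (i : Fin P.m) :
    P.realify.cw s (Fin.natAdd P.m i) = P.cw s i := by
  simp only [cw, Fin.append_right]

lemma realify_isReal : P.realify.IsReal := by
  refine ⟨EuclideanSpace.basisFun _ ℂ, fun k => ?_, fun i k => ?_⟩
  · rw [EuclideanSpace.basisFun_repr]
    exact im_reIm_apply _ k
  · rw [EuclideanSpace.basisFun_repr]
    refine Fin.addCases (fun i => ?_) (fun i => ?_) i
    · rw [realify_input_castAdd]
      exact im_reIm_apply _ k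
    · rw [realify_input_natAdd]
      exact im_reIm_apply _ k

lemma realify_simulatesWitnessesOf : P.realify.SimulatesWitnessesOf P where
  pos x w hw := by
    refine ⟨Fin.append (fun i => ((w i).re : ℂ)) fun i => ((w i).im : ℂ), ?_, fun s => ?_⟩
    · rw [IsPosWitness, Fin.sum_univ_add, ← Finset.sum_add_distrib]
      change _ = reIm P.d P.target
      rw [← hw, map_sum]
      refine Finset.sum_congr rfl fun i _ => ?_
      simp only [realify_avail_castAdd, realify_avail_natAdd, Fin.append_left, Fin.append_right]
      split_ifs
      · exact (reIm_smul _ _).symm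
      · simp
    · rw [posCost, posCost, Fin.sum_univ_add, ← Finset.sum_add_distrib]
      refine Finset.sum_congr rfl fun i _ => ?_
      simp only [realify_cw_castAdd, realify_cw_natAdd, Fin.append_left, Fin.append_right,
        ← mul_add, Complex.sq_norm_re_add_sq_norm_im]
  neg x w hw := by
    refine ⟨reIm P.d w, ⟨?_, fun i hi => ?_⟩, fun s => ?_⟩
    · simp [inner_reIm, hw.1]
    · refine Fin.addCases (fun i hi => ?_) (fun i hi => ?_) i hi
      · rw [realify_avail_castAdd] at hi
        simp [inner_reIm, hw.2 i hi]
      · rw [realify_avail_natAdd] at hi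
        rw [realify_input_natAdd, inner_reIm_I_smul, hw.2 i hi, Complex.zero_im,
          Complex.ofReal_zero]
    · rw [negCost, negCost, Fin.sum_univ_add, ← Finset.sum_add_distrib]
      refine Finset.sum_congr rfl fun i _ => ?_
      rw [realify_cw_castAdd, realify_cw_natAdd, realify_input_castAdd, realify_input_natAdd,
        inner_reIm, inner_reIm_I_smul, ← mul_add, Complex.sq_norm_re_add_sq_norm_im]

end SpanProgram

/-- Every span program can be replaced by a real one, computing the same
function, without increasing the witness size on any input for any cost vector. -/
theorem spanProgram_real_exists (n : ℕ) (P : SpanProgram n) :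
    ∃ P' : SpanProgram n,
      P'.IsReal ∧
      (∀ x : Fin n → Bool, (P'.eval x ↔ P.eval x)) ∧
      ∀ (s : Fin n → ℝ), (∀ j, 0 ≤ s j) →
        ∀ x : Fin n → Bool, P'.wsizex s x ≤ P.wsizex s x := by
  have h := P.realify_simulatesWitnessesOf
  exact ⟨P.realify, P.realify_isReal, h.eval_iff, fun s hs x => h.wsizex_le hs x⟩
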